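/- arXiv:1202.6437 — 2 statements merged into one kernel-verified Lean document; each statement's English description precedes it below -/
import Mathlib

section
/- Let H be a group with a length function ℓ, let A be the free abelian group with basis { a_h : h ∈ H, h ≠ 1 }, let V = A ≀ H be the restricted wreath product, and let Y = { a_h : h ∈ H, h ≠ 1 } ∪ { a_h^{ℓ(h)} h : h ∈ H, h ≠ 1 } ⊆ V. Then Y generates V, and for every non-trivial element h of H, viewed as an element of V, the word length of h with respect to Y satisfies |h|_Y = ℓ(h) + 1. -/
/-- `ℓ` is a length function on the group `H`. -/
def IsLengthFunction {H : Type*} [Group H] (ℓ : H → ℕ) : Prop :=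
  (∀ h : H, ℓ h = 0 ↔ h = 1) ∧ (∀ h : H, ℓ h⁻¹ = ℓ h) ∧ ∀ g h : H, ℓ (g * h) ≤ ℓ g + ℓ h

/-- The word length of `g` with respect to a generating set `X`: the least length of a word in
`X ∪ X⁻¹` representing `g`. -/
noncomputable def wordLength {G : Type*} [Group G] (X : Set G) (g : G) : ℕ :=
  sInf {n | ∃ l : List G, l.length = n ∧ (∀ x ∈ l, x ∈ X ∨ x⁻¹ ∈ X) ∧ l.prod = g}

/-- The additive automorphism of the base `H →₀ A` of a wreath product given by right
translation of the domain: `(b ∘ f)(x) = f (x * b)`. -/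
noncomputable def wreathShift {H : Type*} [Group H] {A : Type*} [AddCommGroup A] (b : H) :
    (H →₀ A) ≃+ (H →₀ A) := Finsupp.domCongr (Equiv.mulRight b).symm

@[simp] theorem wreathShift_apply {H : Type*} [Group H] {A : Type*} [AddCommGroup A]
    (b : H) (f : H →₀ A) (x : H) : wreathShift b f x = f (x * b) := by
  simp [wreathShift, Finsupp.domCongr_apply]

/-- The action of `H` on the (multiplicative) base of the wreath product `A ≀ H`. -/
noncomputable def wreathAction (H : Type*) [Group H] (A : Type*) [AddCommGroup A] :
    H →* MulAut (Multiplicative (H →₀ A)) where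
  toFun b := AddEquiv.toMultiplicative (wreathShift b)
  map_one' := by
    refine MulEquiv.ext fun f => ?_
    refine Finsupp.ext fun x => ?_
    show Finsupp.equivMapDomain (Equiv.mulRight (1 : H)).symm (Multiplicative.toAdd f) x
        = (Multiplicative.toAdd f) x
    simp [Finsupp.equivMapDomain_apply]
  map_mul' := by
    intro a b
    refine MulEquiv.ext fun f => ?_
    refine Finsupp.ext fun x => ?_
    show Finsupp.equivMapDomain (Equiv.mulRight (a * b)).symm (Multiplicative.toAdd f) x
        = Finsupp.equivMapDomain (Equiv.mulRight a).symm
            (Finsupp.equivMapDomain (Equiv.mulRight b).symm (Multiplicative.toAdd f)) x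
    simp [Finsupp.equivMapDomain_apply, mul_assoc]

/-- The wreath product `A ≀ H` of an additive abelian group `A` (the lamp group, written
multiplicatively) by a group `H`, realized as a semidirect product of the base
`H →₀ A` by `H`. -/
noncomputable def WreathProd (A : Type*) [AddCommGroup A] (H : Type*) [Group H] :=
  (Multiplicative (H →₀ A)) ⋊[wreathAction H A] H

noncomputable instance (A : Type*) [AddCommGroup A] (H : Type*) [Group H] :
    Group (WreathProd A H) :=
  inferInstanceAs (Group ((Multiplicative (H →₀ A)) ⋊[wreathAction H A] H))

/-- The embedding of the base into the wreath product. -/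
noncomputable def wreathBase {A : Type*} [AddCommGroup A] {H : Type*} [Group H]
    (w : H →₀ A) : WreathProd A H :=
  SemidirectProduct.inl (Multiplicative.ofAdd w)

/-- The embedding of `H` into the wreath product. -/
noncomputable def wreathRight {A : Type*} [AddCommGroup A] {H : Type*} [Group H]
    (h : H) : WreathProd A H :=
  SemidirectProduct.inr h

/-- The wreath product `V = A ≀ H` where `A` is the free abelian group with basis
`{a_h : h ∈ H \ {1}}`. -/
noncomputable abbrev WreathV (H : Type*) [Group H] : Type _ :=
  WreathProd ({h : H // h ≠ 1} →₀ ℤ) H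

/-- The basis element `a_h` of the base of `V`, raised to the power `m`. -/
noncomputable def aPow {H : Type*} [Group H] (h : H) (hh : h ≠ 1) (m : ℤ) : WreathV H :=
  wreathBase (Finsupp.single (1 : H) (Finsupp.single (⟨h, hh⟩ : {h : H // h ≠ 1}) m))

/-- The generating set `Y = { a_h, a_h^{ℓ(h)} h ∣ h ∈ H \ {1} }` of `V`. -/
noncomputable def genSetY {H : Type*} [Group H] (ℓ : H → ℕ) : Set (WreathV H) :=
  {v | ∃ (h : H) (hh : h ≠ 1), v = aPow h hh 1} ∪
    {v | ∃ (h : H) (hh : h ≠ 1), v = aPow h hh (ℓ h : ℤ) * wreathRight h}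

/-!
The word `a_h^{-ℓ(h)} · a_h^{ℓ(h)} h` gives the upper bound. For the lower bound, give the lamp
`a_g` at position `p` the weight `(ℓ(p⁻¹g) - ℓ(p⁻¹)) / ℓ(g)`, which lies in `[-1, 1]` by the
triangle inequality, and let `Φ(v)` be `ℓ` of the `H`-coordinate of `v`, minus the total weight of
its lamps, plus `1` if that coordinate is nontrivial. A move `a_g^{ℓ(g)} g` deposits exactly as
much weight as it changes `ℓ` of the coordinate, so it changes `Φ` only through the last term; a
lamp `a_g^{±1}` changes `Φ` by its weight. So `Φ` changes by at most `1` per letter, whence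
`|h|_Y ≥ Φ(h) = ℓ(h) + 1`.
-/

section WordLength
variable {G : Type*} [Group G] {X : Set G}

theorem wordLength_prod_le_length {l : List G} (hl : ∀ x ∈ l, x ∈ X ∨ x⁻¹ ∈ X) :
    wordLength X l.prod ≤ l.length :=
  Nat.sInf_le ⟨l, rfl, hl, rfl⟩

theorem exists_word_length_eq_wordLength {g : G} (hg : g ∈ Subgroup.closure X) :
    ∃ l : List G, l.length = wordLength X g ∧ (∀ x ∈ l, x ∈ X ∨ x⁻¹ ∈ X) ∧ l.prod = g := by
  rw [← Subgroup.mem_toSubmonoid, Subgroup.closure_toSubmonoid] at hg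
  obtain ⟨l, hl, hprod⟩ := Submonoid.exists_list_of_mem_closure hg
  exact Nat.sInf_mem (⟨l.length, l, rfl, hl, hprod⟩ : ∃ n, ∃ l : List G, l.length = n ∧ _)

theorem apply_mul_prod_le_add_length (Φ : G → ℝ) (hΦ : ∀ g, ∀ x ∈ X, |Φ (g * x) - Φ g| ≤ 1)
    (l : List G) (hl : ∀ x ∈ l, x ∈ X ∨ x⁻¹ ∈ X) (g : G) :
    Φ (g * l.prod) ≤ Φ g + l.length := by
  induction l generalizing g with
  | nil => simp
  | cons x l ih =>
    have hx : Φ (g * x) ≤ Φ g + 1 := by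
      rcases hl x List.mem_cons_self with hx | hx
      · exact sub_le_iff_le_add'.mp (abs_le.mp (hΦ g x hx)).2
      · simpa using (abs_le.mp (hΦ (g * x) x⁻¹ hx)).1
    have := ih (fun y hy => hl y (List.mem_cons_of_mem x hy)) (g * x)
    rw [List.prod_cons, ← mul_assoc, List.length_cons]
    push_cast
    linarith

theorem le_wordLength_of_abs_sub_le (Φ : G → ℝ) (hΦ₁ : Φ 1 = 0)
    (hΦ : ∀ g, ∀ x ∈ X, |Φ (g * x) - Φ g| ≤ 1) {g : G} (hg : g ∈ Subgroup.closure X) :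
    Φ g ≤ wordLength X g := by
  obtain ⟨l, hlen, hl, rfl⟩ := exists_word_length_eq_wordLength hg
  simpa [hΦ₁, hlen] using apply_mul_prod_le_add_length Φ hΦ l hl 1

end WordLength

namespace WreathProd
variable {A : Type*} [AddCommGroup A] {H : Type*} [Group H]

noncomputable def lamps (v : WreathProd A H) : H →₀ A :=
  Multiplicative.toAdd (SemidirectProduct.left (v : Multiplicative (H →₀ A) ⋊[wreathAction H A] H))

def right (v : WreathProd A H) : H :=
  SemidirectProduct.right (v : Multiplicative (H →₀ A) ⋊[wreathAction H A] H)

@[simp] theorem lamps_mul (v w : WreathProd A H) :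
    (v * w).lamps = v.lamps + wreathShift v.right w.lamps := rfl

@[simp] theorem right_mul (v w : WreathProd A H) : (v * w).right = v.right * w.right := rfl

@[simp] theorem lamps_one : (1 : WreathProd A H).lamps = 0 := rfl

@[simp] theorem right_one : (1 : WreathProd A H).right = 1 := rfl

@[simp] theorem lamps_wreathBase (w : H →₀ A) : (wreathBase w).lamps = w := rfl

@[simp] theorem right_wreathBase (w : H →₀ A) : (wreathBase w).right = 1 := rfl

@[simp] theorem lamps_wreathRight (h : H) : (wreathRight h : WreathProd A H).lamps = 0 := rfl

@[simp] theorem right_wreathRight (h : H) : (wreathRight h : WreathProd A H).right = h := rfl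

@[ext] theorem ext {v w : WreathProd A H} (hl : v.lamps = w.lamps) (hr : v.right = w.right) :
    v = w :=
  SemidirectProduct.ext (Multiplicative.toAdd.injective hl) hr

theorem eq_wreathBase_mul_wreathRight (v : WreathProd A H) :
    v = wreathBase v.lamps * wreathRight v.right := by
  ext <;> simp

end WreathProd

open WreathProd

section Wreath
variable {A : Type*} [AddCommGroup A] {H : Type*} [Group H]

theorem wreathShift_single (b y : H) (a : A) :
    wreathShift b (Finsupp.single y a) = Finsupp.single (y * b⁻¹) a := by
  classical
  ext x
  simp only [wreathShift_apply, Finsupp.single_apply, mul_inv_eq_iff_eq_mul]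

@[simp] theorem wreathBase_zero : (wreathBase 0 : WreathProd A H) = 1 :=
  map_one SemidirectProduct.inl

theorem wreathBase_add (w w' : H →₀ A) :
    (wreathBase (w + w') : WreathProd A H) = wreathBase w * wreathBase w' :=
  map_mul SemidirectProduct.inl (Multiplicative.ofAdd w) (Multiplicative.ofAdd w')

theorem wreathBase_zsmul (m : ℤ) (w : H →₀ A) :
    (wreathBase (m • w) : WreathProd A H) = wreathBase w ^ m :=
  map_zpow SemidirectProduct.inl (Multiplicative.ofAdd w) m

@[simp] theorem wreathRight_one : (wreathRight 1 : WreathProd A H) = 1 :=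
  map_one SemidirectProduct.inr

theorem wreathRight_inv_mul_wreathBase_single_mul (x : H) (a : A) :
    (wreathRight x⁻¹ * wreathBase (Finsupp.single 1 a) * wreathRight x : WreathProd A H)
      = wreathBase (Finsupp.single x a) := by
  ext <;> simp [wreathShift_single]

end Wreath

section Generation
variable {H : Type*} [Group H]

@[simp] theorem lamps_aPow (g : H) (hg : g ≠ 1) (m : ℤ) :
    (aPow g hg m).lamps = Finsupp.single 1 (Finsupp.single ⟨g, hg⟩ m) := rfl

@[simp] theorem right_aPow (g : H) (hg : g ≠ 1) (m : ℤ) : (aPow g hg m).right = 1 := rfl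

theorem aPow_eq_zpow (g : H) (hg : g ≠ 1) (m : ℤ) : aPow g hg m = aPow g hg 1 ^ m := by
  rw [aPow, aPow, ← wreathBase_zsmul, Finsupp.smul_single, Finsupp.smul_single, smul_eq_mul,
    mul_one]

theorem closure_genSetY (ℓ : H → ℕ) : Subgroup.closure (genSetY ℓ) = ⊤ := by
  set S := Subgroup.closure (genSetY ℓ)
  have hlamp (g : H) (hg : g ≠ 1) (m : ℤ) : aPow g hg m ∈ S := by
    rw [aPow_eq_zpow]
    exact S.zpow_mem (Subgroup.subset_closure (Or.inl ⟨g, hg, rfl⟩)) m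
  have hright (x : H) : wreathRight x ∈ S := by
    by_cases hx : x = 1
    · simp [hx]
    · have hmove : aPow x hx (ℓ x) * wreathRight x ∈ S :=
        Subgroup.subset_closure (Or.inr ⟨x, hx, rfl⟩)
      simpa using mul_mem (inv_mem (hlamp x hx (ℓ x))) hmove
  have hbase (w : H →₀ ({h : H // h ≠ 1} →₀ ℤ)) : wreathBase w ∈ S := by
    induction w using Finsupp.induction_linear with
    | zero => simp
    | add w w' hw hw' =>
      rw [wreathBase_add]
      exact mul_mem hw hw'
    | single x a =>
      rw [← wreathRight_inv_mul_wreathBase_single_mul]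
      refine mul_mem (mul_mem (hright _) ?_) (hright x)
      induction a using Finsupp.induction_linear with
      | zero => simp
      | add a a' ha ha' =>
        rw [Finsupp.single_add, wreathBase_add]
        exact mul_mem ha ha'
      | single g m => exact hlamp g.1 g.2 m
  exact eq_top_iff.2 fun v _ => (eq_wreathBase_mul_wreathRight v).symm ▸
    mul_mem (hbase v.lamps) (hright v.right)

theorem wordLength_wreathRight_le (ℓ : H → ℕ) {h : H} (hh : h ≠ 1) :
    wordLength (genSetY ℓ) (wreathRight h : WreathV H) ≤ ℓ h + 1 := by
  set word := List.replicate (ℓ h) (aPow h hh 1)⁻¹ ++ [aPow h hh (ℓ h) * wreathRight h]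
  have hprod : word.prod = wreathRight h := by
    rw [List.prod_append, List.prod_replicate, List.prod_singleton, aPow_eq_zpow h hh (ℓ h),
      inv_pow, zpow_natCast, inv_mul_cancel_left]
  have hletters : ∀ x ∈ word, x ∈ genSetY ℓ ∨ x⁻¹ ∈ genSetY ℓ := by
    intro x hx
    rcases List.mem_append.1 hx with hx | hx
    · rw [List.eq_of_mem_replicate hx, inv_inv]
      exact Or.inr (Or.inl ⟨h, hh, rfl⟩)
    · rw [List.mem_singleton.1 hx]
      exact Or.inl (Or.inr ⟨h, hh, rfl⟩)
  simpa [word, hprod] using wordLength_prod_le_length hletters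

end Generation

theorem IsLengthFunction.abs_sub_le {H : Type*} [Group H] {ℓ : H → ℕ} (hℓ : IsLengthFunction ℓ)
    (x g : H) : |(ℓ (x * g) : ℝ) - ℓ x| ≤ ℓ g := by
  have hle : ℓ (x * g) ≤ ℓ x + ℓ g := hℓ.2.2 x g
  have hge : ℓ x ≤ ℓ (x * g) + ℓ g := by
    simpa [hℓ.2.1] using hℓ.2.2 (x * g) g⁻¹
  rw [abs_sub_le_iff, sub_le_iff_le_add, sub_le_iff_le_add]
  constructor <;> norm_cast <;> omega

section Potential
variable {H : Type*} [Group H] {ℓ : H → ℕ}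

noncomputable def lampWeight (ℓ : H → ℕ) (x g : H) : ℝ := ((ℓ (x * g) : ℝ) - ℓ x) / ℓ g

theorem abs_lampWeight_le_one (hℓ : IsLengthFunction ℓ) (x g : H) : |lampWeight ℓ x g| ≤ 1 := by
  rw [lampWeight, abs_div, Nat.abs_cast]
  exact div_le_one_of_le₀ (hℓ.abs_sub_le x g) (Nat.cast_nonneg _)

theorem natCast_mul_lampWeight (hℓ : IsLengthFunction ℓ) (x g : H) :
    ℓ g * lampWeight ℓ x g = ℓ (x * g) - ℓ x := by
  rcases eq_or_ne (ℓ g) 0 with hg | hg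
  · have := hℓ.abs_sub_le x g
    rw [hg, Nat.cast_zero, abs_nonpos_iff, sub_eq_zero] at this
    rw [hg, this, Nat.cast_zero, zero_mul, sub_self]
  · exact mul_div_cancel₀ _ (Nat.cast_ne_zero.2 hg)

noncomputable def lampValue (ℓ : H → ℕ) : (H →₀ ({h : H // h ≠ 1} →₀ ℤ)) →+ ℝ :=
  Finsupp.liftAddHom fun p => Finsupp.liftAddHom fun g => zmultiplesHom ℝ (lampWeight ℓ p⁻¹ g)

@[simp] theorem lampValue_single_single (p : H) (g : {h : H // h ≠ 1}) (n : ℤ) :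
    lampValue ℓ (Finsupp.single p (Finsupp.single g n)) = n * lampWeight ℓ p⁻¹ g := by
  rw [lampValue, Finsupp.liftAddHom_apply_single, Finsupp.liftAddHom_apply_single,
    zmultiplesHom_apply, zsmul_eq_mul]

noncomputable def potential (ℓ : H → ℕ) (v : WreathV H) : ℝ :=
  ℓ v.right - lampValue ℓ v.lamps + ({1}ᶜ : Set H).indicator 1 v.right

theorem potential_one (hℓ : IsLengthFunction ℓ) : potential ℓ 1 = 0 := by
  simp [potential, (hℓ.1 1).2 rfl]

theorem potential_wreathRight {h : H} (hh : h ≠ 1) : potential ℓ (wreathRight h) = ℓ h + 1 := by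
  simp [potential, hh]

theorem potential_mul_aPow (v : WreathV H) (g : H) (hg : g ≠ 1) (m : ℤ) :
    potential ℓ (v * aPow g hg m) = potential ℓ v - m * lampWeight ℓ v.right g := by
  simp only [potential, right_mul, right_aPow, mul_one, lamps_mul, lamps_aPow, wreathShift_single,
    one_mul, map_add, lampValue_single_single, inv_inv]
  ring

theorem abs_potential_mul_sub_le (hℓ : IsLengthFunction ℓ) (v : WreathV H) {y : WreathV H}
    (hy : y ∈ genSetY ℓ) : |potential ℓ (v * y) - potential ℓ v| ≤ 1 := by
  rcases hy with ⟨g, hg, rfl⟩ | ⟨g, hg, rfl⟩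
  · simpa [potential_mul_aPow] using abs_lampWeight_le_one hℓ v.right g
  · have hdiff : potential ℓ (v * (aPow g hg (ℓ g) * wreathRight g)) - potential ℓ v =
        ({1}ᶜ : Set H).indicator 1 (v.right * g) - ({1}ᶜ : Set H).indicator 1 v.right := by
      simp only [potential, lamps_mul, right_mul, lamps_aPow, right_aPow, lamps_wreathRight,
        right_wreathRight, map_add, map_zero, wreathShift_single, lampValue_single_single,
        one_mul, inv_inv, add_zero, Int.cast_natCast, natCast_mul_lampWeight hℓ]
      ring
    classical
    rw [hdiff, Set.indicator_apply, Set.indicator_apply]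
    split_ifs <;> norm_num

end Potential

/-- `Y` generates `V = A ≀ H` and, for every non-trivial `h ∈ H ≤ V`,
`|h|_Y = ℓ(h) + 1`. -/
theorem wordLength_wrt_Y_eq {H : Type} [Group H] (ℓ : H → ℕ)
    (hℓ : IsLengthFunction ℓ) :
    Subgroup.closure (genSetY ℓ) = ⊤ ∧
    ∀ (h : H), h ≠ 1 → wordLength (genSetY ℓ) (wreathRight h : WreathV H) = ℓ h + 1 := by
  refine ⟨closure_genSetY ℓ, fun h hh => le_antisymm (wordLength_wreathRight_le ℓ hh) ?_⟩
  have hmem : wreathRight h ∈ Subgroup.closure (genSetY ℓ) := by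
    simp [closure_genSetY]
  have hΦ := le_wordLength_of_abs_sub_le (potential ℓ) (potential_one hℓ)
    (fun v _ hy => abs_potential_mul_sub_le hℓ v hy) hmem
  rw [potential_wreathRight hh] at hΦ
  exact_mod_cast hΦ
end

section
/- Let G be an elementary amenable group. Then: (1) the elementary class c(G) is either 0 or a successor ordinal; (2) if G is countable, then c(G) < ω₁, where ω₁ is the first uncountable ordinal; (3) if G is finitely generated, then c(G) is either 0 or the successor of an ordinal which is itself 0 or a successor (in particular, c(G) is never the successor of a limit ordinal). -/
/-!
Since `EG` is monotone in the stage and a limit stage is the union of the earlier ones, the least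
stage containing a group is never a limit. For a countable group, a directed union can be replaced
by a cofinal increasing sequence of its members; as `ω₁` is regular, countably many countable
stages have a countable bound, so induction keeps every stage below `ω₁`. For a finitely generated
group, a directed union is trivial, since the finitely many generators lie in one member; and an
extension of two groups of `EG λ`, `λ` a limit, already happens at a stage `max β₁ β₂ + 1 < λ`.
So a finitely generated group in `EG (λ + 1)` lies in `EG λ`.
-/

universe u

/-- Groups obtained from a class `C` by applying one extension or one directed union. -/
def ObtainedByExtOrUnion (C : ∀ G : Type u, Group G → Prop)
    (G : Type u) (instG : Group G) : Prop :=
  letI := instG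
  (∃ N : Subgroup G, ∃ _ : N.Normal, C ↥N inferInstance ∧ C (G ⧸ N) inferInstance) ∨
  (∃ (ι : Type u) (K : ι → Subgroup G), Nonempty ι ∧ Directed (· ≤ ·) K ∧
      (∀ g : G, ∃ i, g ∈ K i) ∧ ∀ i, C ↥(K i) inferInstance)

/-- The transfinite hierarchy `EG_α`: `EG_0` consists of finite and abelian groups, at successor
stages one applies one extension or one directed union, and at limit stages one takes the union
of the previous stages. -/
noncomputable def EG : Ordinal.{u} → ∀ G : Type u, Group G → Prop := fun α =>
  Ordinal.limitRecOn (motive := fun _ => ∀ G : Type u, Group G → Prop) α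
    (fun G _ => Finite G ∨ ∀ a b : G, a * b = b * a)
    (fun _ ih => ObtainedByExtOrUnion ih)
    (fun o _ ih G instG => ∃ β, ∃ hβ : β < o, ih β hβ G instG)

/-- A group is elementary amenable if it lies in some `EG_α`. -/
def IsElementaryAmenable (G : Type u) [instG : Group G] : Prop := ∃ α, EG α G instG

/-- The elementary class `c(G)`: the least ordinal `α` with `G ∈ EG_α`. -/
noncomputable def elemClass (G : Type u) [instG : Group G] : Ordinal.{u} :=
  sInf {α | EG α G instG}

open Ordinal Order

lemma Ordinal.eq_zero_or_eq_add_one_of_not_isSuccLimit {o : Ordinal} (h : ¬ IsSuccLimit o) :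
    o = 0 ∨ ∃ β, o = β + 1 := by
  rcases zero_or_succ_or_isSuccLimit o with h0 | ⟨β, rfl⟩ | hlim
  · exact Or.inl h0
  · exact Or.inr ⟨β, succ_eq_add_one β⟩
  · exact absurd hlim h

lemma Directed.exists_monotone_comp_ge {ι β : Type*} [Preorder β] {f : ι → β}
    (hf : Directed (· ≤ ·) f) (g : ℕ → ι) :
    ∃ j : ℕ → ι, Monotone (f ∘ j) ∧ ∀ n, f (g n) ≤ f (j n) := by
  choose ub hub₁ hub₂ using hf
  let j : ℕ → ι := fun n => Nat.rec (g 0) (fun n jn => ub jn (g (n + 1))) n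
  refine ⟨j, monotone_nat_of_le_succ fun n => hub₁ _ _, ?_⟩
  rintro (_ | n)
  exacts [le_rfl, hub₂ _ _]

section Hierarchy

variable {G H : Type u}

lemma EG_zero {i : Group G} :
    EG 0 G i ↔ (Finite G ∨ ∀ a b : G, a * b = b * a) := by
  rw [EG, limitRecOn_zero]

lemma EG_add_one (α : Ordinal.{u}) : EG (α + 1) = ObtainedByExtOrUnion (EG α) := by
  rw [EG, limitRecOn_add_one]
  rfl

lemma EG_of_isSuccLimit {α : Ordinal.{u}} (hα : IsSuccLimit α) {i : Group G} :
    EG α G i ↔ ∃ β < α, EG β G i := by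
  rw [EG, limitRecOn_limit _ _ _ _ hα]
  exact ⟨fun ⟨β, hβ, h⟩ => ⟨β, hβ, h⟩, fun ⟨β, hβ, h⟩ => ⟨β, hβ, h⟩⟩

lemma EG_add_one_of_extension [Group G] {α : Ordinal.{u}} (N : Subgroup G) [N.Normal]
    (hN : EG α N inferInstance) (hQ : EG α (G ⧸ N) inferInstance) :
    EG (α + 1) G inferInstance := by
  rw [EG_add_one]
  exact Or.inl ⟨N, inferInstance, hN, hQ⟩

/-- `ObtainedByExtOrUnion` asks for an index type in `Type u`; the range of `K`, a set of
subgroups, serves as one. -/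
lemma EG_add_one_of_directed_cover [Group G] {α : Ordinal.{u}} {ι : Sort*} [Nonempty ι]
    (K : ι → Subgroup G) (hdir : Directed (· ≤ ·) K) (hcov : ∀ g, ∃ i, g ∈ K i)
    (hK : ∀ i, EG α (K i) inferInstance) : EG (α + 1) G inferInstance := by
  rw [EG_add_one]
  refine Or.inr ⟨Set.range K, Subtype.val, Set.Nonempty.to_subtype (Set.range_nonempty K),
    (directedOn_range.mpr hdir).directed_val, fun g => ?_, ?_⟩
  · obtain ⟨i, hi⟩ := hcov g
    exact ⟨⟨K i, i, rfl⟩, hi⟩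
  · rintro ⟨_, i, rfl⟩
    exact hK i

lemma EG_of_mulEquiv (α : Ordinal.{u}) [iG : Group G] [iH : Group H] (e : G ≃* H)
    (h : EG α G iG) : EG α H iH := by
  induction α using Ordinal.limitRecOn generalizing G H with
  | zero =>
    rw [EG_zero] at h ⊢
    refine h.imp (fun hfin => @Finite.of_equiv _ _ hfin e.toEquiv) fun hcomm a b => ?_
    simpa using congrArg e (hcomm (e.symm a) (e.symm b))
  | add_one β ih =>
    rw [EG_add_one] at h
    rcases h with ⟨N, _, hN, hQ⟩ | ⟨ι, K, _, hdir, hcov, hK⟩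
    · have : (N.map e.toMonoidHom).Normal := Subgroup.Normal.map ‹_› _ e.surjective
      exact EG_add_one_of_extension (N.map e.toMonoidHom)
        (ih (N.equivMapOfInjective e.toMonoidHom e.injective) hN)
        (ih (QuotientGroup.congr N _ e rfl) hQ)
    · refine EG_add_one_of_directed_cover (fun i => (K i).map e.toMonoidHom)
        (hdir.mono_comp _ (g := Subgroup.map e.toMonoidHom) fun _ _ => Subgroup.map_mono)
        (fun h => ?_)
        fun i => ih ((K i).equivMapOfInjective e.toMonoidHom e.injective) (hK i)
      obtain ⟨i, hi⟩ := hcov (e.symm h)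
      exact ⟨i, e.symm h, hi, by simp⟩
  | limit β hβ ih =>
    rw [EG_of_isSuccLimit hβ] at h ⊢
    obtain ⟨γ, hγ, h⟩ := h
    exact ⟨γ, hγ, ih γ hγ e h⟩

lemma EG_add_one_of_EG [i : Group G] {α : Ordinal.{u}} (h : EG α G i) : EG (α + 1) G i :=
  EG_add_one_of_directed_cover (ι := Unit) (fun _ => ⊤) (fun _ _ => ⟨(), le_rfl, le_rfl⟩)
    (fun _ => ⟨(), trivial⟩)
    fun _ => EG_of_mulEquiv α Subgroup.topEquiv.symm h

lemma EG_mono [i : Group G] {α β : Ordinal.{u}} (hαβ : α ≤ β) (h : EG α G i) : EG β G i := by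
  induction β using Ordinal.limitRecOn with
  | zero => rwa [nonpos_iff_eq_zero.mp hαβ] at h
  | add_one β ih =>
    rcases hαβ.lt_or_eq with hlt | rfl
    · exact EG_add_one_of_EG (ih (lt_add_one_iff.mp hlt))
    · exact h
  | limit β hβ ih =>
    rcases hαβ.lt_or_eq with hlt | rfl
    · exact (EG_of_isSuccLimit hβ).mpr ⟨α, hlt, h⟩
    · exact h

end Hierarchy

section ElemClass

variable {G : Type u} [i : Group G]

lemma elemClass_le {α : Ordinal.{u}} (h : EG α G i) : elemClass G ≤ α :=
  csInf_le' h

lemma IsElementaryAmenable.EG_elemClass (h : IsElementaryAmenable G) : EG (elemClass G) G i :=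
  csInf_mem h

lemma not_isSuccLimit_elemClass (h : IsElementaryAmenable G) : ¬ IsSuccLimit (elemClass G) := by
  intro hlim
  obtain ⟨β, hβ, hβG⟩ := (EG_of_isSuccLimit hlim).mp h.EG_elemClass
  exact (elemClass_le hβG).not_gt hβ

end ElemClass

section Countable

variable {G : Type u}

lemma exists_EG_lt_omega_one (α : Ordinal.{u}) [i : Group G] [Countable G] (h : EG α G i) :
    ∃ β < ω₁, EG β G i := by
  induction α using Ordinal.limitRecOn generalizing G with
  | zero => exact ⟨0, (Cardinal.isSuccLimit_omega 1).bot_lt, h⟩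
  | add_one α ih =>
    rw [EG_add_one] at h
    rcases h with ⟨N, _, hN, hQ⟩ | ⟨ι, K, _, hdir, hcov, hK⟩
    · have : Countable (G ⧸ N) := Quotient.countable
      obtain ⟨β₁, hβ₁, hN⟩ := ih hN
      obtain ⟨β₂, hβ₂, hQ⟩ := ih hQ
      exact ⟨max β₁ β₂ + 1, (Cardinal.isSuccLimit_omega 1).add_one_lt (max_lt hβ₁ hβ₂),
        EG_add_one_of_extension N (EG_mono (le_max_left _ _) hN) (EG_mono (le_max_right _ _) hQ)⟩
    · obtain ⟨f, hf⟩ := exists_surjective_nat G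
      choose idx hidx using hcov
      obtain ⟨j, hmono, hle⟩ := hdir.exists_monotone_comp_ge (idx ∘ f)
      choose β hβ hKβ using fun n => ih (hK (j n))
      refine ⟨iSup β + 1, (Cardinal.isSuccLimit_omega 1).add_one_lt (iSup_lt_omega_one hβ),
        EG_add_one_of_directed_cover (K ∘ j) hmono.directed_le (fun g => ?_)
          fun n => EG_mono (Ordinal.le_iSup β n) (hKβ n)⟩
      obtain ⟨n, rfl⟩ := hf g
      exact ⟨n, hle n (hidx (f n))⟩
  | limit α hα ih =>
    obtain ⟨γ, hγ, h⟩ := (EG_of_isSuccLimit hα).mp h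
    exact ih γ hγ h

lemma elemClass_lt_omega_one [Group G] [Countable G] (h : IsElementaryAmenable G) :
    elemClass G < ω₁ := by
  obtain ⟨α, hα⟩ := h
  obtain ⟨β, hβ, hβG⟩ := exists_EG_lt_omega_one α hα
  exact (elemClass_le hβG).trans_lt hβ

end Countable

section FinitelyGenerated

variable {G : Type u}

lemma Group.exists_eq_top_of_directed_cover [Group G] [hG : Group.FG G] {ι : Type*} [Nonempty ι]
    {K : ι → Subgroup G} (hdir : Directed (· ≤ ·) K) (hcov : ∀ g, ∃ i, g ∈ K i) :
    ∃ i, K i = ⊤ := by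
  obtain ⟨S, hS⟩ := hG.out
  choose idx hidx using hcov
  obtain ⟨i, hi⟩ := hdir.finite_set_le (S.finite_toSet.image idx)
  refine ⟨i, eq_top_iff.mpr (hS ▸ (Subgroup.closure_le _).mpr fun s hs => ?_)⟩
  exact hi (idx s) ⟨s, hs, rfl⟩ (hidx s)

lemma EG_of_extension_of_isSuccLimit [Group G] {α : Ordinal.{u}} (hα : IsSuccLimit α)
    (N : Subgroup G) [N.Normal] (hN : EG α N inferInstance) (hQ : EG α (G ⧸ N) inferInstance) :
    EG α G inferInstance := by
  obtain ⟨β₁, hβ₁, hN⟩ := (EG_of_isSuccLimit hα).mp hN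
  obtain ⟨β₂, hβ₂, hQ⟩ := (EG_of_isSuccLimit hα).mp hQ
  exact (EG_of_isSuccLimit hα).mpr ⟨max β₁ β₂ + 1, hα.add_one_lt (max_lt hβ₁ hβ₂),
    EG_add_one_of_extension N (EG_mono (le_max_left _ _) hN) (EG_mono (le_max_right _ _) hQ)⟩

lemma EG_of_EG_add_one_of_isSuccLimit [i : Group G] [Group.FG G] {α : Ordinal.{u}}
    (hα : IsSuccLimit α) (h : EG (α + 1) G i) : EG α G i := by
  rw [EG_add_one] at h
  rcases h with ⟨N, _, hN, hQ⟩ | ⟨ι, K, _, hdir, hcov, hK⟩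
  · exact EG_of_extension_of_isSuccLimit hα N hN hQ
  · obtain ⟨j, hj⟩ := Group.exists_eq_top_of_directed_cover hdir hcov
    exact EG_of_mulEquiv α ((MulEquiv.subgroupCongr hj).trans Subgroup.topEquiv) (hK j)

lemma elemClass_ne_add_one_of_isSuccLimit [Group G] [Group.FG G] (h : IsElementaryAmenable G)
    {α : Ordinal.{u}} (hα : IsSuccLimit α) : elemClass G ≠ α + 1 := by
  intro hc
  have hαG := EG_of_EG_add_one_of_isSuccLimit hα (hc ▸ h.EG_elemClass)
  exact (elemClass_le hαG).not_gt (hc ▸ lt_add_one α)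

end FinitelyGenerated

/-- For an elementary amenable group `G`: `c(G)` is `0` or a successor; if `G` is countable then
`c(G) < ω₁`; and if `G` is finitely generated then `c(G)` is `0` or the successor of an ordinal
which is itself `0` or a successor. -/
theorem elemClass_basic_properties (G : Type u) [Group G] (hea : IsElementaryAmenable G) :
    (elemClass G = 0 ∨ ∃ β : Ordinal.{u}, elemClass G = β + 1) ∧
    (Countable G → elemClass G < (Cardinal.aleph 1).ord) ∧
    (Group.FG G →
      elemClass G = 0 ∨ ∃ β : Ordinal.{u}, (β = 0 ∨ ∃ γ, β = γ + 1) ∧ elemClass G = β + 1) := by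
  have hzero_or_succ := eq_zero_or_eq_add_one_of_not_isSuccLimit (not_isSuccLimit_elemClass hea)
  refine ⟨hzero_or_succ, fun _ => ?_, fun _ => ?_⟩
  · rw [Cardinal.ord_aleph]
    exact elemClass_lt_omega_one hea
  · obtain h0 | ⟨β, hβ⟩ := hzero_or_succ
    · exact Or.inl h0
    · exact Or.inr ⟨β, eq_zero_or_eq_add_one_of_not_isSuccLimit
        fun hlim => elemClass_ne_add_one_of_isSuccLimit hea hlim hβ, hβ⟩
end
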